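/- Let S ⊆ ℝ be a convex set, let p, q : S → ℝ be concave functions, and let Φ : ℝ → ℝ be a convex function that is Lipschitz with constant 1. Then the function x ↦ p(x) + q(x) − Φ(p(x) − q(x)) is concave on S. -/
import Mathlib


open Real Set

/-- If `p, q` are concave on a convex set `S ⊆ ℝ` and `Φ : ℝ → ℝ` is
convex and `1`-Lipschitz, then `x ↦ p(x) + q(x) − Φ(p(x) − q(x))` is concave on `S`. -/
theorem stmt9 (S : Set ℝ) (hS : Convex ℝ S) (p q Φ : ℝ → ℝ)
    (hp : ConcaveOn ℝ S p) (hq : ConcaveOn ℝ S q)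
    (hΦ : ConvexOn ℝ Set.univ Φ) (hLip : LipschitzWith 1 Φ) :
    ConcaveOn ℝ S (fun x => p x + q x - Φ (p x - q x)) := by
  refine ⟨hS, fun x hx y hy a b ha hb hab => ?_⟩
  set z := a • x + b • y with hz
  have hpz : a * p x + b * p y ≤ p z := hp.2 hx hy ha hb hab
  have hqz : a * q x + b * q y ≤ q z := hq.2 hx hy ha hb hab
  have hconv : Φ (a * (p x - q x) + b * (p y - q y)) ≤
      a * Φ (p x - q x) + b * Φ (p y - q y) := by
    simpa [smul_eq_mul] using
      hΦ.2 (Set.mem_univ (p x - q x)) (Set.mem_univ (p y - q y)) ha hb hab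
  have hlip : Φ (p z - q z) - Φ (a * (p x - q x) + b * (p y - q y)) ≤
      |p z - q z - (a * (p x - q x) + b * (p y - q y))| := by
    have := hLip.dist_le_mul (p z - q z) (a * (p x - q x) + b * (p y - q y))
    rw [Real.dist_eq, Real.dist_eq] at this
    simp only [NNReal.coe_one, one_mul] at this
    calc Φ (p z - q z) - Φ (a * (p x - q x) + b * (p y - q y))
        ≤ |Φ (p z - q z) - Φ (a * (p x - q x) + b * (p y - q y))| := le_abs_self _
      _ ≤ _ := this
  have habs : |p z - q z - (a * (p x - q x) + b * (p y - q y))| ≤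
      (p z - (a * p x + b * p y)) + (q z - (a * q x + b * q y)) := by
    rw [abs_le]
    constructor <;> nlinarith
  simp only [smul_eq_mul]
  nlinarith
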